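/- arXiv:2605.13513 — 2 statements merged into one kernel-verified Lean document; each statement's English description precedes it below -/
import Mathlib

section
/- For nonnegative reals a₁, a₂, b₁, b₂, setting z₁ = √((a₁²+b₁²)/2) and z₂ = √((a₂²+b₂²)/2), one has |z₁ − z₂|² ≤ ½|a₁−a₂|² + ½|b₁−b₂|², with equality only if a₁b₂ = a₂b₁. -/
/-! With `u = (a₁, b₁)` and `v = (a₂, b₂)` the quantities `√((aᵢ² + bᵢ²) / 2)` are `‖u‖ / √2` and
`‖v‖ / √2`, and the right-hand side minus the left-hand side is exactly `‖u‖ ‖v‖ - ⟪u, v⟫`.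
Cauchy–Schwarz, through Lagrange's identity `‖u‖² ‖v‖² = ⟪u, v⟫² + (a₁ b₂ - a₂ b₁)²`, makes this
nonnegative, and zero only when the cross term `a₁ b₂ - a₂ b₁` vanishes. -/

theorem sq_add_sq_mul_sq_add_sq_eq_inner_sq_add_cross_sq (a₁ a₂ b₁ b₂ : ℝ) :
    (a₁ ^ 2 + b₁ ^ 2) * (a₂ ^ 2 + b₂ ^ 2) = (a₁ * a₂ + b₁ * b₂) ^ 2 + (a₁ * b₂ - a₂ * b₁) ^ 2 := by
  ring

theorem inner_le_sqrt_mul_sq_add_sq (a₁ a₂ b₁ b₂ : ℝ) :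
    a₁ * a₂ + b₁ * b₂ ≤ √((a₁ ^ 2 + b₁ ^ 2) * (a₂ ^ 2 + b₂ ^ 2)) := by
  refine (le_abs_self _).trans (Real.abs_le_sqrt ?_)
  rw [sq_add_sq_mul_sq_add_sq_eq_inner_sq_add_cross_sq]
  exact le_add_of_nonneg_right (sq_nonneg _)

theorem mul_eq_mul_of_sqrt_mul_sq_add_sq_eq_inner {a₁ a₂ b₁ b₂ : ℝ}
    (h : √((a₁ ^ 2 + b₁ ^ 2) * (a₂ ^ 2 + b₂ ^ 2)) = a₁ * a₂ + b₁ * b₂) :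
    a₁ * b₂ = a₂ * b₁ := by
  have hsq : (a₁ ^ 2 + b₁ ^ 2) * (a₂ ^ 2 + b₂ ^ 2) = (a₁ * a₂ + b₁ * b₂) ^ 2 := by
    rw [← h, Real.sq_sqrt (by positivity)]
  rw [sq_add_sq_mul_sq_add_sq_eq_inner_sq_add_cross_sq, add_eq_left, sq_eq_zero_iff] at hsq
  exact sub_eq_zero.mp hsq

theorem sqrt_sub_sqrt_sq (s t : ℝ) (hs : 0 ≤ s) (ht : 0 ≤ t) :
    (√s - √t) ^ 2 = s + t - 2 * √(s * t) := by
  rw [sub_sq, Real.sq_sqrt hs, Real.sq_sqrt ht, Real.sqrt_mul hs]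
  ring

theorem hidden_convexity_defect (a₁ a₂ b₁ b₂ : ℝ) :
    (1 / 2) * (a₁ - a₂) ^ 2 + (1 / 2) * (b₁ - b₂) ^ 2
        - (√((a₁ ^ 2 + b₁ ^ 2) / 2) - √((a₂ ^ 2 + b₂ ^ 2) / 2)) ^ 2
      = √((a₁ ^ 2 + b₁ ^ 2) * (a₂ ^ 2 + b₂ ^ 2)) - (a₁ * a₂ + b₁ * b₂) := by
  have hprod : (a₁ ^ 2 + b₁ ^ 2) / 2 * ((a₂ ^ 2 + b₂ ^ 2) / 2)
      = (a₁ ^ 2 + b₁ ^ 2) * (a₂ ^ 2 + b₂ ^ 2) / 2 ^ 2 := by ring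
  rw [sqrt_sub_sqrt_sq _ _ (by positivity) (by positivity), hprod,
    Real.sqrt_div' _ (by positivity), Real.sqrt_sq zero_le_two]
  ring

theorem hidden_convexity_general (a₁ a₂ b₁ b₂ : ℝ) :
    |Real.sqrt ((a₁ ^ 2 + b₁ ^ 2) / 2) - Real.sqrt ((a₂ ^ 2 + b₂ ^ 2) / 2)| ^ 2
        ≤ (1 / 2) * |a₁ - a₂| ^ 2 + (1 / 2) * |b₁ - b₂| ^ 2 ∧
      (|Real.sqrt ((a₁ ^ 2 + b₁ ^ 2) / 2) - Real.sqrt ((a₂ ^ 2 + b₂ ^ 2) / 2)| ^ 2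
          = (1 / 2) * |a₁ - a₂| ^ 2 + (1 / 2) * |b₁ - b₂| ^ 2 → a₁ * b₂ = a₂ * b₁) := by
  have hdefect := hidden_convexity_defect a₁ a₂ b₁ b₂
  simp only [sq_abs]
  refine ⟨?_, fun heq => mul_eq_mul_of_sqrt_mul_sq_add_sq_eq_inner ?_⟩
  · linarith [inner_le_sqrt_mul_sq_add_sq a₁ a₂ b₁ b₂]
  · linarith

/-- hidden-convexity inequality with equality case. -/
theorem hidden_convexity (a₁ a₂ b₁ b₂ : ℝ)
    (ha₁ : 0 ≤ a₁) (ha₂ : 0 ≤ a₂) (hb₁ : 0 ≤ b₁) (hb₂ : 0 ≤ b₂) :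
    |Real.sqrt ((a₁ ^ 2 + b₁ ^ 2) / 2) - Real.sqrt ((a₂ ^ 2 + b₂ ^ 2) / 2)| ^ 2
        ≤ (1 / 2) * |a₁ - a₂| ^ 2 + (1 / 2) * |b₁ - b₂| ^ 2 ∧
      (|Real.sqrt ((a₁ ^ 2 + b₁ ^ 2) / 2) - Real.sqrt ((a₂ ^ 2 + b₂ ^ 2) / 2)| ^ 2
          = (1 / 2) * |a₁ - a₂| ^ 2 + (1 / 2) * |b₁ - b₂| ^ 2 → a₁ * b₂ = a₂ * b₁) :=
  hidden_convexity_general a₁ a₂ b₁ b₂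
end

section
/- Let u ∈ H(Ω) and write u = u⁺ − u⁻ with u⁺u⁻ = 0. Then E_L(u, u⁺) ≥ E_L(u⁺, u⁺), where E_L(u,v) = (c_N/2)∬_{|x−y|≤1} (u(x)−u(y))(v(x)−v(y))/|x−y|^N dx dy − c_N ∬_{|x−y|≥1} u(x)v(y)/|x−y|^N dx dy + ρ_N ∫ u v. -/
open MeasureTheory

/-!
Write `u⁺ = max u 0`. In the near field, `(a - b)(a⁺ - b⁺) = (a⁺ - b⁺)² + a⁺b⁻ + b⁺a⁻` puts the
integrand of `E(u, u⁺)` between that of `E(u⁺, u⁺)` and the `H(Ω)`-seminorm integrand, which makes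
both integrable and lets Fubini compare them. In the far field the inner integral factors as
`u x * I x` with `I ≥ 0`, so replacing `u x` by `u⁺ x` takes the positive part of the outer
integrand, which never lowers a Bochner integral, integrable or not. The diagonal
terms agree pointwise since `u u⁺ = u⁺ u⁺`.
-/

noncomputable def cLog (N : ℕ) : ℝ := Real.pi ^ (-(N : ℝ) / 2) * Real.Gamma ((N : ℝ) / 2)

/-- Near-field bilinear form `E(u,v)`. -/
noncomputable def nearForm (N : ℕ) (u v : EuclideanSpace ℝ (Fin N) → ℝ) : ℝ :=
  (cLog N / 2) *
    ∫ x, ∫ y, (if ‖x - y‖ ≤ 1 then (u x - u y) * (v x - v y) / ‖x - y‖ ^ N else 0)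

/-- Far-field term. -/
noncomputable def farForm (N : ℕ) (u v : EuclideanSpace ℝ (Fin N) → ℝ) : ℝ :=
  cLog N * ∫ x, ∫ y, (if 1 ≤ ‖x - y‖ then u x * v y / ‖x - y‖ ^ N else 0)

/-- The bilinear form `E_L` of the Logarithmic Laplacian (`ρ` stands for `ρ_N`). -/
noncomputable def logLapForm (N : ℕ) (ρ : ℝ) (u v : EuclideanSpace ℝ (Fin N) → ℝ) : ℝ :=
  nearForm N u v - farForm N u v + ρ * ∫ x, u x * v x

lemma cLog_nonneg (N : ℕ) : 0 ≤ cLog N :=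
  mul_nonneg (Real.rpow_nonneg Real.pi_pos.le _) (Real.Gamma_nonneg_of_nonneg (by positivity))

lemma sq_sub_max_zero_le_mul (a b : ℝ) :
    (max a 0 - max b 0) ^ 2 ≤ (a - b) * (max a 0 - max b 0) := by
  rcases le_total a 0 with ha | ha <;> rcases le_total b 0 with hb | hb <;>
    simp only [max_eq_left, max_eq_right, ha, hb] <;> nlinarith

lemma mul_sub_max_zero_le_sq (a b : ℝ) : (a - b) * (max a 0 - max b 0) ≤ (a - b) ^ 2 :=
  calc (a - b) * (max a 0 - max b 0) ≤ |a - b| * |max a 0 - max b 0| :=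
        (le_abs_self _).trans (abs_mul _ _).le
    _ ≤ |a - b| * |a - b| := mul_le_mul_of_nonneg_left (abs_max_sub_max_le_abs a b 0) (abs_nonneg _)
    _ = (a - b) ^ 2 := by rw [← sq, sq_abs]

lemma mul_max_zero_self (a : ℝ) : a * max a 0 = max a 0 * max a 0 := by
  rcases le_total a 0 with ha | ha <;> simp [ha]

lemma integral_le_integral_max_zero {α : Type*} [MeasurableSpace α] {μ : Measure α}
    (f : α → ℝ) : ∫ x, f x ∂μ ≤ ∫ x, max (f x) 0 ∂μ := by
  by_cases hf : Integrable f μ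
  · exact integral_mono hf hf.pos_part fun x => le_max_left _ _
  · rw [integral_undef hf]
    exact integral_nonneg fun x => le_max_right _ _

lemma integral_integral_mono_of_le_of_integrable {α β : Type*} [MeasurableSpace α]
    [MeasurableSpace β] {μ : Measure α} {ν : Measure β} [SFinite μ] [SFinite ν]
    {f g S : α × β → ℝ} (hS : Integrable S (μ.prod ν)) (hf : AEStronglyMeasurable f (μ.prod ν))
    (hg : AEStronglyMeasurable g (μ.prod ν)) (hg0 : 0 ≤ g) (hgf : g ≤ f) (hfS : f ≤ S) :
    ∫ x, ∫ y, g (x, y) ∂ν ∂μ ≤ ∫ x, ∫ y, f (x, y) ∂ν ∂μ := by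
  have hfi : Integrable f (μ.prod ν) :=
    hS.mono' hf (.of_forall fun p => (Real.norm_of_nonneg (hg0.trans hgf p)).trans_le (hfS p))
  have hgi : Integrable g (μ.prod ν) :=
    hfi.mono' hg (.of_forall fun p => (Real.norm_of_nonneg (hg0 p)).trans_le (hgf p))
  rw [← integral_prod g hgi, ← integral_prod f hfi]
  exact integral_mono hgi hfi hgf

section

variable {N : ℕ}

noncomputable def nearIntegrand (v w : EuclideanSpace ℝ (Fin N) → ℝ)
    (p : EuclideanSpace ℝ (Fin N) × EuclideanSpace ℝ (Fin N)) : ℝ :=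
  if ‖p.1 - p.2‖ ≤ 1 then (v p.1 - v p.2) * (w p.1 - w p.2) / ‖p.1 - p.2‖ ^ N else 0

lemma aestronglyMeasurable_nearIntegrand {v w : EuclideanSpace ℝ (Fin N) → ℝ}
    (hv : AEStronglyMeasurable v volume) (hw : AEStronglyMeasurable w volume) :
    AEStronglyMeasurable (nearIntegrand v w) (volume.prod volume) := by
  have hnorm : Measurable fun p : EuclideanSpace ℝ (Fin N) × EuclideanSpace ℝ (Fin N) =>
      ‖p.1 - p.2‖ := by fun_prop
  have h := (((hv.comp_fst.sub hv.comp_snd).mul (hw.comp_fst.sub hw.comp_snd)).mul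
    (hnorm.pow_const N).inv.aestronglyMeasurable).indicator
      (measurableSet_le hnorm (measurable_const (a := 1)))
  convert h using 1
  ext p
  simp [nearIntegrand, Set.indicator_apply, div_eq_mul_inv]

lemma nearForm_posPart_le_nearForm {u : EuclideanSpace ℝ (Fin N) → ℝ}
    (hu : AEStronglyMeasurable u volume)
    (hS : Integrable
      (fun p : EuclideanSpace ℝ (Fin N) × EuclideanSpace ℝ (Fin N) =>
        if ‖p.1 - p.2‖ ≤ 1 then (u p.1 - u p.2) ^ 2 / ‖p.1 - p.2‖ ^ N else 0)
      (volume.prod volume)) :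
    nearForm N (fun x => max (u x) 0) (fun x => max (u x) 0) ≤
      nearForm N u (fun x => max (u x) 0) := by
  have hu' : AEStronglyMeasurable (fun x => max (u x) 0) volume :=
    hu.sup aestronglyMeasurable_const
  refine mul_le_mul_of_nonneg_left ?_ (div_nonneg (cLog_nonneg N) zero_le_two)
  refine integral_integral_mono_of_le_of_integrable hS (aestronglyMeasurable_nearIntegrand hu hu')
    (aestronglyMeasurable_nearIntegrand hu' hu') ?_ ?_ ?_ <;> intro p <;>
    simp only [nearIntegrand, Pi.zero_apply] <;> split_ifs <;> try rfl
  · exact div_nonneg (mul_self_nonneg _) (by positivity)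
  · rw [← sq]
    gcongr
    exact sq_sub_max_zero_le_mul _ _
  · gcongr
    exact mul_sub_max_zero_le_sq _ _

lemma integral_farIntegrand_eq_mul (v w : EuclideanSpace ℝ (Fin N) → ℝ)
    (x : EuclideanSpace ℝ (Fin N)) :
    ∫ y, (if 1 ≤ ‖x - y‖ then v x * w y / ‖x - y‖ ^ N else 0) =
      v x * ∫ y, (if 1 ≤ ‖x - y‖ then w y / ‖x - y‖ ^ N else 0) := by
  rw [← integral_const_mul]
  congr 1
  ext y
  split_ifs <;> ring

lemma farForm_le_farForm_posPart (u : EuclideanSpace ℝ (Fin N) → ℝ) :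
    farForm N u (fun x => max (u x) 0) ≤
      farForm N (fun x => max (u x) 0) (fun x => max (u x) 0) := by
  refine mul_le_mul_of_nonneg_left ?_ (cLog_nonneg N)
  simp only [integral_farIntegrand_eq_mul u,
    integral_farIntegrand_eq_mul (fun x => max (u x) 0)]
  set I := fun x : EuclideanSpace ℝ (Fin N) =>
    ∫ y, (if 1 ≤ ‖x - y‖ then max (u y) 0 / ‖x - y‖ ^ N else 0)
  have hI : ∀ x, 0 ≤ I x := fun x =>
    integral_nonneg fun y => by dsimp only; split_ifs <;> positivity
  calc ∫ x, u x * I x ≤ ∫ x, max (u x * I x) 0 := integral_le_integral_max_zero _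
    _ = ∫ x, max (u x) 0 * I x := by
      congr 1
      ext x
      rw [max_mul_of_nonneg _ _ (hI x), zero_mul]

end

theorem logLapForm_posPart_general (N : ℕ) (ρ : ℝ)
    (u : EuclideanSpace ℝ (Fin N) → ℝ)
    (hu2 : MemLp u 2 volume)
    (hseminorm : Integrable
      (fun p : EuclideanSpace ℝ (Fin N) × EuclideanSpace ℝ (Fin N) =>
        if ‖p.1 - p.2‖ ≤ 1 then (u p.1 - u p.2) ^ 2 / ‖p.1 - p.2‖ ^ N else 0)
      (volume.prod volume)) :
    logLapForm N ρ u (fun x => max (u x) 0) ≥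
      logLapForm N ρ (fun x => max (u x) 0) (fun x => max (u x) 0) := by
  have hnear := nearForm_posPart_le_nearForm hu2.aestronglyMeasurable hseminorm
  have hfar := farForm_le_farForm_posPart (N := N) u
  have hdiag : ∫ x, u x * max (u x) 0 = ∫ x, max (u x) 0 * max (u x) 0 := by
    simp only [mul_max_zero_self]
  rw [ge_iff_le, logLapForm, logLapForm, hdiag]
  linarith

/-- for `u ∈ H(Ω)`, writing `u⁺ = max(u,0)`, one has
`E_L(u, u⁺) ≥ E_L(u⁺, u⁺)`. -/
theorem logLapForm_posPart (N : ℕ) (ρ : ℝ) (Ω : Set (EuclideanSpace ℝ (Fin N)))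
    (hΩb : Bornology.IsBounded Ω) (hΩm : MeasurableSet Ω)
    (u : EuclideanSpace ℝ (Fin N) → ℝ)
    (hu2 : MemLp u 2 volume) (hu0 : ∀ x ∉ Ω, u x = 0)
    (hseminorm : Integrable
      (fun p : EuclideanSpace ℝ (Fin N) × EuclideanSpace ℝ (Fin N) =>
        if ‖p.1 - p.2‖ ≤ 1 then (u p.1 - u p.2) ^ 2 / ‖p.1 - p.2‖ ^ N else 0)
      (volume.prod volume)) :
    logLapForm N ρ u (fun x => max (u x) 0) ≥
      logLapForm N ρ (fun x => max (u x) 0) (fun x => max (u x) 0) :=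
  logLapForm_posPart_general N ρ u hu2 hseminorm
end
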